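/- arXiv:1912.03694 — 3 statements merged into one kernel-verified Lean document; each statement's English description precedes it below -/
import Mathlib

section
/- Let a_1, …, a_m be complex numbers and let μ_1, …, μ_m be pairwise distinct complex numbers with |μ_i| ≤ 1 for every i, and define f(n) = Σ_{i=1}^m a_i μ_i^n for integers n ≥ 1. If f(n) is an integer for every integer n ≥ 1, then f is periodic: there exists a positive integer d such that f(n + d) = f(n) for all integers n ≥ 1. -/
/-!
The values `f 1, f 2, …` are integers of absolute value at most `∑ i, ‖a i‖`, so they range over a
finite set. By pigeonhole two windows of `m` consecutive values agree, say those starting at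
`p + 1` and `p + d + 1`. Since the `μ i` are distinct, the transposed Vandermonde matrix is
invertible, so `a i * μ i ^ (p + 1) = a i * μ i ^ (p + d + 1)` for every `i`. Hence each term with
`a i ≠ 0` and `μ i ≠ 0` has `μ i ^ d = 1`, and the remaining terms vanish for `n ≥ 1`.
-/

open Finset

theorem norm_sum_mul_pow_le_of_norm_le_one {ι 𝕜 : Type*} [NormedDivisionRing 𝕜] (s : Finset ι)
    (a μ : ι → 𝕜) (hμ : ∀ i ∈ s, ‖μ i‖ ≤ 1) (n : ℕ) :
    ‖∑ i ∈ s, a i * μ i ^ n‖ ≤ ∑ i ∈ s, ‖a i‖ := by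
  refine (norm_sum_le _ _).trans (sum_le_sum fun i hi => ?_)
  rw [norm_mul, norm_pow]
  exact mul_le_of_le_one_right (norm_nonneg _) (pow_le_one₀ (norm_nonneg _) (hμ i hi))

theorem RCLike.finite_setOf_intCast_norm_le {𝕜 : Type*} [RCLike 𝕜] (C : ℝ) :
    {z : 𝕜 | (∃ k : ℤ, z = k) ∧ ‖z‖ ≤ C}.Finite := by
  refine ((Set.finite_Icc (-⌈C⌉) ⌈C⌉).image ((↑) : ℤ → 𝕜)).subset ?_
  rintro _ ⟨⟨k, rfl⟩, hk⟩
  rw [← RCLike.ofReal_intCast, RCLike.norm_ofReal, ← Int.cast_abs] at hk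
  exact ⟨k, abs_le.1 (Int.cast_le.1 (hk.trans (Int.le_ceil C))), rfl⟩

theorem Set.Finite.exists_lt_forall_add_eq {α : Type*} {u : ℕ → α} (hu : (Set.range u).Finite)
    (m : ℕ) : ∃ p q, p < q ∧ ∀ k : Fin m, u (p + k) = u (q + k) := by
  obtain ⟨p, q, hpq, hwin⟩ := (Set.Finite.pi (t := fun _ : Fin m => Set.range u)
    fun _ => hu).exists_lt_map_eq_of_forall_mem (f := fun n (k : Fin m) => u (n + k))
    fun n => Set.mem_univ_pi.2 fun k => Set.mem_range_self (n + k)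
  exact ⟨p, q, hpq, congrFun hwin⟩

theorem Function.Injective.eq_of_forall_sum_mul_pow_eq {R : Type*} [CommRing R] [IsDomain R]
    {m : ℕ} {μ c c' : Fin m → R} (hμ : Function.Injective μ)
    (h : ∀ k : Fin m, ∑ i, c i * μ i ^ (k : ℕ) = ∑ i, c' i * μ i ^ (k : ℕ)) : c = c' := by
  refine sub_eq_zero.1 (Matrix.eq_zero_of_forall_pow_sum_mul_pow_eq_zero hμ fun k => ?_)
  simp only [Pi.sub_apply, sub_mul, sum_sub_distrib, h k, sub_self]

theorem mul_pow_add_eq_of_mul_pow_add_eq {M : Type*} [CommMonoidWithZero M] [IsCancelMulZero M]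
    {a μ : M} {p d n : ℕ} (h : a * μ ^ (p + d) = a * μ ^ p) (hn : n ≠ 0) :
    a * μ ^ (n + d) = a * μ ^ n := by
  rcases eq_or_ne a 0 with rfl | ha
  · simp only [zero_mul]
  rcases eq_or_ne μ 0 with rfl | hμ
  · rw [zero_pow hn, zero_pow (by omega)]
  have hμd : μ ^ d = 1 := by
    rw [pow_add] at h
    exact mul_left_cancel₀ (pow_ne_zero p hμ) ((mul_left_cancel₀ ha h).trans (mul_one _).symm)
  rw [pow_add, hμd, mul_one]

/-- Periodicity of integer-valued exponential sums with frequencies of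
absolute value at most 1 (used in the proof of Proposition 2.1). -/
theorem integer_valued_exponential_sum_periodic
    {m : ℕ} (a μ : Fin m → ℂ)
    (hdist : Function.Injective μ)
    (hμ : ∀ i, ‖μ i‖ ≤ 1)
    (f : ℕ → ℂ) (hf : ∀ n, f n = ∑ i, a i * μ i ^ n)
    (hint : ∀ n : ℕ, 1 ≤ n → ∃ z : ℤ, f n = (z : ℂ)) :
    ∃ d : ℕ, 0 < d ∧ ∀ n : ℕ, 1 ≤ n → f (n + d) = f n := by
  have hfin : (Set.range fun n => f (n + 1)).Finite :=
    (RCLike.finite_setOf_intCast_norm_le (∑ i, ‖a i‖)).subset <| Set.range_subset_iff.2 fun n =>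
      ⟨hint (n + 1) (by omega), hf (n + 1) ▸ norm_sum_mul_pow_le_of_norm_le_one _ a μ
        (fun i _ => hμ i) _⟩
  obtain ⟨p, q, hpq, hwin⟩ := hfin.exists_lt_forall_add_eq m
  obtain ⟨d, hd, rfl⟩ : ∃ d, 0 < d ∧ q = p + d := ⟨q - p, by omega, by omega⟩
  have hshift : ∀ n k : ℕ, ∑ i, a i * μ i ^ n * μ i ^ k = f (n + k) := fun n k => by
    simp only [hf, pow_add, mul_assoc]
  have hcoef : (fun i => a i * μ i ^ (p + 1 + d)) = fun i => a i * μ i ^ (p + 1) :=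
    hdist.eq_of_forall_sum_mul_pow_eq fun k => by
      rw [hshift, hshift]
      convert (hwin k).symm using 2 <;> omega
  refine ⟨d, hd, fun n hn => ?_⟩
  simp only [hf]
  exact sum_congr rfl fun i _ => mul_pow_add_eq_of_mul_pow_add_eq (congrFun hcoef i) (by omega)
end

section
/- Let a_1, …, a_m be complex numbers and let μ_1, …, μ_m be pairwise distinct complex numbers with |μ_i| ≤ 1 for every i, and define f(n) = Σ_{i=1}^m a_i μ_i^n for integers n ≥ 1. If f(n) is an integer for every integer n ≥ 1, then for every integer n₀ ≥ 1 one has |f(n₀)| ≤ limsup_{n→∞} |f(n)|. In particular, if there is a real number c such that |f(n)| ≤ c for all sufficiently large n, then |f(1)| ≤ c. -/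
open Filter

/-!
`f` is bounded by `∑ i, ‖a i‖` and integer-valued for `n ≥ 1`, so it takes finitely many values
there, and by pigeonhole two windows of `m` consecutive values coincide. Since the `μ i` are
distinct, the Vandermonde matrix is invertible, so agreement on one window of length `m` makes
`f` periodic on `n ≥ 1`. A periodic sequence takes each of its values infinitely often, which
bounds `‖f n₀‖` by the limsup and by any eventual bound.
-/

lemma pow_mul_eq_zero_of_pow_mul_eq_zero {M : Type*} [MonoidWithZero M] [NoZeroDivisors M]
    {x y : M} {k n : ℕ} (h : x ^ k * y = 0) (hn : n ≠ 0) : x ^ n * y = 0 := by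
  rcases mul_eq_zero.1 h with hx | hy
  · rw [eq_zero_of_pow_eq_zero hx, zero_pow hn, zero_mul]
  · rw [hy, mul_zero]

lemma eq_zero_of_sum_mul_pow_eq_zero {R : Type*} [CommRing R] [IsDomain R] {m : ℕ}
    {μ v : Fin m → R} (hμ : Function.Injective μ)
    (h : ∀ j : Fin m, ∑ i, v i * μ i ^ (j : ℕ) = 0) : v = 0 := by
  refine Matrix.eq_zero_of_mulVec_eq_zero (M := (Matrix.vandermonde μ).transpose) ?_ (funext ?_)
  · rwa [Matrix.det_transpose, Matrix.det_vandermonde_ne_zero_iff]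
  · intro j
    simpa [Matrix.mulVec, dotProduct, Matrix.vandermonde, mul_comm] using h j

lemma finite_setOf_norm_intCast_le (C : ℝ) : {z : ℤ | ‖(z : ℂ)‖ ≤ C}.Finite := by
  convert (isCompact_closedBall (0 : ℤ) C).finite_of_discrete
  ext z
  simp [Complex.norm_intCast, Int.norm_eq_abs]

lemma exists_pos_forall_add_eq_of_finite_range {α : Type*} {g : ℕ → α}
    (hg : (Set.range g).Finite) (m : ℕ) :
    ∃ N T, 0 < T ∧ ∀ j : Fin m, g (N + T + j) = g (N + j) := by
  obtain ⟨N, N', hlt, heq⟩ := (Set.Finite.pi fun _ : Fin m => hg).exists_lt_map_eq_of_forall_mem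
    (f := fun n (j : Fin m) => g (n + j)) fun n => Set.mem_univ_pi.2 fun j => Set.mem_range_self _
  refine ⟨N, N' - N, by omega, fun j => ?_⟩
  rw [Nat.add_sub_cancel' hlt.le]
  exact (congrFun heq j).symm

lemma Function.Periodic.frequently_atTop_eq {α : Type*} {u : ℕ → α} {T : ℕ}
    (h : Function.Periodic u T) (hT : 0 < T) (n : ℕ) : ∃ᶠ k in atTop, u k = u n :=
  frequently_atTop.2 fun K => ⟨n + K * T, by nlinarith, h.nat_mul K n⟩

def expSum {ι R : Type*} [Fintype ι] [Semiring R] (a μ : ι → R) (n : ℕ) : R :=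
  ∑ i, a i * μ i ^ n

lemma norm_expSum_le {ι R : Type*} [Fintype ι] [SeminormedRing R] [NormOneClass R] {a μ : ι → R}
    (hμ : ∀ i, ‖μ i‖ ≤ 1) (n : ℕ) : ‖expSum a μ n‖ ≤ ∑ i, ‖a i‖ :=
  (norm_sum_le _ _).trans <| Finset.sum_le_sum fun i _ =>
    (norm_mul_le _ _).trans <| mul_le_of_le_one_right (norm_nonneg _)
      ((norm_pow_le _ n).trans (pow_le_one₀ (norm_nonneg _) (hμ i)))

lemma expSum_add_eq_of_forall_fin_eq {R : Type*} [CommRing R] [IsDomain R] {m : ℕ}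
    {a μ : Fin m → R} (hμ : Function.Injective μ) {N T : ℕ}
    (h : ∀ j : Fin m, expSum a μ (N + T + j) = expSum a μ (N + j)) {n : ℕ} (hn : n ≠ 0) :
    expSum a μ (n + T) = expSum a μ n := by
  have hv : ∀ i, a i * μ i ^ N * (μ i ^ T - 1) = 0 :=
    congrFun <| eq_zero_of_sum_mul_pow_eq_zero hμ fun j => by
      rw [← sub_eq_zero.2 (h j), expSum, expSum, ← Finset.sum_sub_distrib]
      exact Finset.sum_congr rfl fun i _ => by ring
  rw [← sub_eq_zero, expSum, expSum, ← Finset.sum_sub_distrib]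
  refine Finset.sum_eq_zero fun i _ => ?_
  have := pow_mul_eq_zero_of_pow_mul_eq_zero (x := μ i) (k := N) (y := a i * (μ i ^ T - 1))
    (by linear_combination hv i) hn
  linear_combination this

theorem exists_periodic_expSum_succ {m : ℕ} {a μ : Fin m → ℂ} (hμinj : Function.Injective μ)
    (hμ : ∀ i, ‖μ i‖ ≤ 1) (hint : ∀ n : ℕ, 1 ≤ n → ∃ z : ℤ, expSum a μ n = z) :
    ∃ T, 0 < T ∧ Function.Periodic (fun n => expSum a μ (n + 1)) T := by
  have hfin : (Set.range fun n => expSum a μ (n + 1)).Finite :=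
    ((finite_setOf_norm_intCast_le (∑ i, ‖a i‖)).image Int.cast).subset <| by
      rintro _ ⟨n, rfl⟩
      obtain ⟨z, hz⟩ := hint (n + 1) (Nat.le_add_left 1 n)
      exact ⟨z, (hz ▸ norm_expSum_le hμ (n + 1) : ‖(z : ℂ)‖ ≤ _), hz.symm⟩
  obtain ⟨N, T, hT, hwin⟩ := exists_pos_forall_add_eq_of_finite_range hfin m
  have hwin' : ∀ j : Fin m, expSum a μ (N + 1 + T + j) = expSum a μ (N + 1 + j) := fun j => by
    simpa only [add_right_comm _ 1] using hwin j
  refine ⟨T, hT, fun n => ?_⟩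
  simpa only [add_right_comm n T 1] using
    expSum_add_eq_of_forall_fin_eq hμinj hwin' n.succ_ne_zero

/-- An integer-valued exponential sum with frequencies of absolute value at
most 1 is bounded at every point by the limsup of its absolute values; in
particular an asymptotic bound is a bound at n = 1 (the final step in the
proof of Proposition 2.1). -/
theorem integer_valued_exponential_sum_le_limsup
    {m : ℕ} (a μ : Fin m → ℂ)
    (hdist : Function.Injective μ)
    (hμ : ∀ i, ‖μ i‖ ≤ 1)
    (f : ℕ → ℂ) (hf : ∀ n, f n = ∑ i, a i * μ i ^ n)
    (hint : ∀ n : ℕ, 1 ≤ n → ∃ z : ℤ, f n = (z : ℂ)) :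
    (∀ n₀ : ℕ, 1 ≤ n₀ →
      ‖f n₀‖ ≤ limsup (fun n => ‖f n‖) atTop) ∧
    (∀ c : ℝ, (∀ᶠ n in atTop, ‖f n‖ ≤ c) →
      ‖f 1‖ ≤ c) := by
  obtain rfl : f = expSum a μ := funext hf
  obtain ⟨T, hT, hper⟩ := exists_periodic_expSum_succ hdist hμ hint
  have hfreq : ∀ n₀, 1 ≤ n₀ → ∃ᶠ k in atTop, expSum a μ k = expSum a μ n₀ := by
    intro n₀ hn₀
    obtain ⟨n, rfl⟩ := Nat.exists_eq_add_of_le' hn₀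
    exact (tendsto_add_atTop_nat 1).frequently (hper.frequently_atTop_eq hT n)
  have hbdd : IsBoundedUnder (· ≤ ·) atTop fun n => ‖expSum a μ n‖ :=
    isBoundedUnder_of ⟨_, norm_expSum_le hμ⟩
  refine ⟨fun n₀ hn₀ => le_limsup_of_frequently_le
    ((hfreq n₀ hn₀).mono fun k hk => hk ▸ le_rfl) hbdd, fun c hc => ?_⟩
  obtain ⟨k, hk, hkeq⟩ := (hc.and_frequently (hfreq 1 le_rfl)).exists
  exact hkeq ▸ hk
end

section
/- Let A be a square complex matrix (indexed by a finite type) all of whose eigenvalues have absolute value at most 1, and suppose that the trace of A^k is an integer for every integer k ≥ 1. Then: (a) the sequence k ↦ Tr(A^k) is periodic, i.e. there is a positive integer d with Tr(A^{k+d}) = Tr(A^k) for all k ≥ 1; (b) every nonzero eigenvalue of A is a root of unity; and (c) |Tr(A)| ≤ limsup_{k→∞} |Tr(A^k)|. -/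
/-! Over `ℂ`, `det (p A) = ∏ p λᵢ` for every polynomial `p`, the `λᵢ` being the eigenvalues
with multiplicity; hence the characteristic polynomial of `A ^ k` has roots `λᵢ ^ k` and
`Tr (A ^ k) = ∑ λᵢ ^ k`. These power sums are integers of absolute value at most `n`, so they
take finitely many values, and by pigeonhole two windows `(Tr A ^ (a + i))_{i < L}` and
`(Tr A ^ (b + i))_{i < L}` with `a < b` coincide. Taking `L` to be the number of distinct
eigenvalues, invertibility of the Vandermonde matrix gives `λ ^ a * (λ ^ (b - a) - 1) = 0` for
each eigenvalue `λ`. So every nonzero eigenvalue is a `(b - a)`-th root of unity, the traces of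
positive powers are `(b - a)`-periodic, and `Tr A` recurs infinitely often below the limsup. -/

open Filter

namespace Matrix

open Polynomial

variable {n K : Type*} [Fintype n] [DecidableEq n] [Field K] [IsAlgClosed K]

theorem card_roots_charpoly (A : Matrix n n K) :
    Multiset.card A.charpoly.roots = Fintype.card n := by
  rw [IsAlgClosed.card_roots_eq_natDegree, charpoly_natDegree_eq_dim]

theorem det_sub_algebraMap_eq_prod_roots_charpoly (A : Matrix n n K) (r : K) :
    (A - algebraMap K _ r).det = (A.charpoly.roots.map (· - r)).prod := by
  have hsplit := prod_multiset_X_sub_C_of_monic_of_roots_card_eq A.charpoly_monic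
    (by rw [card_roots_charpoly, charpoly_natDegree_eq_dim])
  have heval := congrArg (eval r) hsplit
  simp only [eval_multiset_prod, Multiset.map_map, Function.comp_def, eval_sub, eval_X, eval_C,
    eval_charpoly] at heval
  change (A - scalar n r).det = _
  rw [← neg_sub, det_neg, ← heval, ← A.card_roots_charpoly, ← Multiset.card_map (r - ·),
    ← Multiset.prod_map_neg, Multiset.map_map]
  simp

theorem det_aeval_eq_prod_roots_charpoly (A : Matrix n n K) (p : K[X]) :
    (aeval A p).det = (A.charpoly.roots.map p.eval).prod := by
  let φ : K[X] →* K := detMonoidHom.comp (aeval (R := K) A).toMonoidHom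
  have hφ (q : K[X]) : (aeval A q).det = φ q := rfl
  have hφC (c : K) : φ (C c) = c ^ Fintype.card n := by
    simp [← hφ, algebraMap_eq_diagonal]
  have hφX (r : K) : φ (X - C r) = (A.charpoly.roots.map (· - r)).prod := by
    simpa [← hφ] using det_sub_algebraMap_eq_prod_roots_charpoly A r
  have hp := C_leadingCoeff_mul_prod_multiset_X_sub_C (p := p) IsAlgClosed.card_roots_eq_natDegree
  conv_lhs => rw [hφ, ← hp, map_mul, map_multiset_prod, Multiset.map_map]
  conv_rhs => rw [← hp]
  simp only [Function.comp_def, hφC, hφX, eval_mul, eval_C, eval_multiset_prod, Multiset.map_map,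
    eval_sub, eval_X, Multiset.prod_map_mul, Multiset.map_const', Multiset.prod_replicate,
    card_roots_charpoly]
  rw [Multiset.prod_map_prod_map]

theorem charpoly_aeval_eq_prod (A : Matrix n n K) (p : K[X]) :
    (aeval A p).charpoly = (A.charpoly.roots.map fun x => X - C (p.eval x)).prod := by
  refine Polynomial.funext fun x => ?_
  rw [eval_charpoly, show scalar n x - aeval A p = aeval A (C x - p) by simp; rfl,
    det_aeval_eq_prod_roots_charpoly, eval_multiset_prod, Multiset.map_map]
  simp

theorem trace_aeval_eq_sum_roots_charpoly (A : Matrix n n K) (p : K[X]) :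
    (aeval A p).trace = (A.charpoly.roots.map p.eval).sum := by
  rw [trace_eq_sum_roots_charpoly, charpoly_aeval_eq_prod,
    ← roots_multiset_prod_X_sub_C (A.charpoly.roots.map p.eval), Multiset.map_map]
  rfl

theorem trace_pow_eq_sum_roots_charpoly (A : Matrix n n K) (k : ℕ) :
    (A ^ k).trace = (A.charpoly.roots.map (· ^ k)).sum := by
  simpa using A.trace_aeval_eq_sum_roots_charpoly (X ^ k)

end Matrix

theorem Finset.eq_zero_of_forall_lt_card_sum_mul_pow_eq_zero {R : Type*} [CommRing R]
    [IsDomain R] (S : Finset R) (w : R → R) (h : ∀ i < S.card, ∑ x ∈ S, w x * x ^ i = 0) :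
    ∀ x ∈ S, w x = 0 := by
  have hw := Matrix.eq_zero_of_forall_pow_sum_mul_pow_eq_zero
    (f := fun j => (S.equivFin.symm j : R)) (v := fun j => w (S.equivFin.symm j))
    (Subtype.val_injective.comp S.equivFin.symm.injective) fun i => by
      rw [← h i i.2, ← S.sum_coe_sort]
      exact S.equivFin.symm.sum_comp fun x => w x * x ^ (i : ℕ)
  intro x hx
  simpa using congrFun hw (S.equivFin ⟨x, hx⟩)

theorem exists_lt_forall_lt_add_eq_of_finite_range {α : Type*} {u : ℕ → α}
    (hu : (Set.range u).Finite) (L : ℕ) :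
    ∃ a b, a < b ∧ ∀ i < L, u (a + i) = u (b + i) := by
  obtain ⟨a, b, hab, h⟩ := Set.Finite.exists_lt_map_eq_of_forall_mem
    (f := fun j (i : Fin L) => u (j + i)) (t := Set.univ.pi fun _ => Set.range u)
    (fun j => by simp) (Set.Finite.pi fun _ => hu)
  exact ⟨a, b, hab, fun i hi => congrFun h ⟨i, hi⟩⟩

theorem Multiset.exists_pow_eq_one_of_finite_range_sum_map_pow {R : Type*} [CommRing R]
    [IsDomain R] [CharZero R] (s : Multiset R)
    (h : (Set.range fun k => (s.map (· ^ k)).sum).Finite) :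
    ∃ d, 0 < d ∧ ∀ x ∈ s, x ≠ 0 → x ^ d = 1 := by
  classical
  obtain ⟨a, b, hab, hwin⟩ := exists_lt_forall_lt_add_eq_of_finite_range h s.toFinset.card
  obtain ⟨d, rfl⟩ := Nat.exists_eq_add_of_lt hab
  have hw := s.toFinset.eq_zero_of_forall_lt_card_sum_mul_pow_eq_zero
    (fun x => s.count x * x ^ a * (x ^ (d + 1) - 1)) fun i hi => by
      have hi := hwin i hi
      simp only [Finset.sum_multiset_map_count, nsmul_eq_mul] at hi
      rw [← sub_eq_zero.2 hi.symm, ← Finset.sum_sub_distrib]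
      refine Finset.sum_congr rfl fun x _ => ?_
      ring
  refine ⟨d + 1, d.succ_pos, fun x hx hx0 => ?_⟩
  simpa [hx, hx0, sub_eq_zero] using hw x (mem_toFinset.2 hx)

theorem Multiset.norm_sum_map_pow_le_card {𝕜 : Type*} [NormedDivisionRing 𝕜]
    (s : Multiset 𝕜) (hs : ∀ x ∈ s, ‖x‖ ≤ 1) (k : ℕ) : ‖(s.map (· ^ k)).sum‖ ≤ card s := by
  refine (norm_multiset_sum_le _).trans ?_
  have hle : ∀ y ∈ (s.map (· ^ k)).map norm, y ≤ 1 := by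
    simp only [Multiset.map_map, Multiset.mem_map, Function.comp_apply, norm_pow,
      forall_exists_index, and_imp, forall_apply_eq_imp_iff₂]
    exact fun x hx => pow_le_one₀ (norm_nonneg x) (hs x hx)
  simpa using Multiset.sum_le_card_nsmul _ 1 hle

theorem Complex.finite_range_of_forall_eq_intCast {ι : Type*} (u : ι → ℂ) (B : ℕ)
    (hint : ∀ i, ∃ m : ℤ, u i = m) (hB : ∀ i, ‖u i‖ ≤ B) : (Set.range u).Finite := by
  refine ((Set.finite_Icc (-B : ℤ) B).image (↑)).subset (Set.range_subset_iff.2 fun i => ?_)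
  obtain ⟨m, hm⟩ := hint i
  have hmB := hB i
  rw [hm, Complex.norm_intCast] at hmB
  exact ⟨m, abs_le.1 (by exact_mod_cast hmB), hm.symm⟩

theorem le_limsup_of_forall_add_eq {α : Type*} [ConditionallyCompleteLattice α] {u : ℕ → α}
    {k d : ℕ} (hd : 0 < d) (hper : ∀ j, k ≤ j → u (j + d) = u j)
    (hu : IsBoundedUnder (· ≤ ·) atTop u) : u k ≤ limsup u atTop := by
  have hiter (m : ℕ) : u (k + m * d) = u k := by
    induction m with
    | zero => simp
    | succ m ih => rw [Nat.succ_mul, ← add_assoc, hper _ (by omega), ih]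
  exact le_limsup_of_frequently_le
    (frequently_atTop.2 fun a => ⟨k + a * d, by nlinarith, (hiter a).ge⟩) hu

/-- Linear-algebra form of the weight argument in the proof of
Proposition 2.1: a complex square matrix whose eigenvalues all have absolute
value at most 1 and whose powers all have integer trace has a periodic trace
sequence, all its nonzero eigenvalues are roots of unity, and its trace is
bounded by the limsup of the traces of its powers. -/
theorem trace_sequence_of_integer_matrix_weight_le_zero
    {n : Type*} [Fintype n] [DecidableEq n] (A : Matrix n n ℂ)
    (heig : ∀ μ ∈ spectrum ℂ A, ‖μ‖ ≤ 1)
    (hint : ∀ k : ℕ, 1 ≤ k → ∃ z : ℤ, (A ^ k).trace = (z : ℂ)) :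
    (∃ d : ℕ, 0 < d ∧ ∀ k : ℕ, 1 ≤ k → (A ^ (k + d)).trace = (A ^ k).trace) ∧
    (∀ μ ∈ spectrum ℂ A, μ ≠ 0 → ∃ d : ℕ, 0 < d ∧ μ ^ d = 1) ∧
    ‖A.trace‖ ≤
      limsup (fun k : ℕ => ‖(A ^ k).trace‖) atTop := by
  set s := A.charpoly.roots
  have hmem {x : ℂ} : x ∈ spectrum ℂ A ↔ x ∈ s := by
    rw [Matrix.mem_spectrum_iff_isRoot_charpoly, Polynomial.mem_roots A.charpoly_monic.ne_zero]
  have htr := A.trace_pow_eq_sum_roots_charpoly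
  have hbound (k : ℕ) : ‖(A ^ k).trace‖ ≤ Fintype.card n := by
    rw [htr, ← A.card_roots_charpoly]
    exact s.norm_sum_map_pow_le_card (fun x hx => heig x (hmem.2 hx)) k
  have hint_all (k : ℕ) : ∃ z : ℤ, (A ^ k).trace = z := by
    rcases k.eq_zero_or_pos with rfl | hk
    · exact ⟨Fintype.card n, by simp⟩
    · exact hint k hk
  obtain ⟨d, hd, hroot⟩ := s.exists_pow_eq_one_of_finite_range_sum_map_pow <| by
    simpa only [htr] using Complex.finite_range_of_forall_eq_intCast _ _ hint_all hbound
  have hper (k : ℕ) (hk : 1 ≤ k) : (A ^ (k + d)).trace = (A ^ k).trace := by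
    rw [htr, htr]
    refine congrArg Multiset.sum (Multiset.map_congr rfl fun x hx => ?_)
    rcases eq_or_ne x 0 with rfl | hx0
    · simp [show k ≠ 0 by omega]
    · rw [pow_add, hroot x hx hx0, mul_one]
  refine ⟨⟨d, hd, hper⟩, fun μ hμ hμ0 => ⟨d, hd, hroot μ (hmem.1 hμ) hμ0⟩, ?_⟩
  have hle := le_limsup_of_forall_add_eq (u := fun k => ‖(A ^ k).trace‖) (k := 1) hd
    (fun k hk => congrArg norm (hper k hk)) (isBoundedUnder_of ⟨_, hbound⟩)
  rwa [pow_one] at hle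
end
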